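/- If BAᵀ is invertible with polar decomposition BAᵀ = UP (U orthogonal, P symmetric positive definite), then U is the unique orthogonal matrix minimizing ‖VA - B‖ (Frobenius norm) over all V ∈ O(n). -/

import Mathlib

/-!
Expanding the square, `‖V A - B‖² = ‖A‖² + ‖B‖² - 2 tr (Vᵀ B Aᵀ)` for orthogonal
`V`; with `B Aᵀ = U P` this exceeds the value at `U` by `2 (tr P - tr (Q P))`, where `Q = Vᵀ U`
is orthogonal. With `S = √P` that gap equals `‖(Q - 1) S‖²`, which is nonnegative and,
`S` being invertible, vanishes only when `Q = 1`, i.e. `V = U`.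
-/

open Matrix

/-- The squared Frobenius norm of a matrix. -/
def frobSq {m n : Type*} [Fintype m] [Fintype n] (A : Matrix m n ℝ) : ℝ :=
  ∑ i, ∑ j, (A i j) ^ 2

open scoped MatrixOrder

section Frobenius

variable {m n : Type*} [Fintype m] [Fintype n]

lemma frobSq_eq_trace (M : Matrix m n ℝ) : frobSq M = (Mᵀ * M).trace := by
  simp only [frobSq, trace, diag, mul_apply, transpose_apply, sq]
  exact Finset.sum_comm

lemma frobSq_nonneg (M : Matrix m n ℝ) : 0 ≤ frobSq M := by
  unfold frobSq; positivity

lemma frobSq_eq_zero_iff {M : Matrix m n ℝ} : frobSq M = 0 ↔ M = 0 := by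
  rw [frobSq_eq_trace, ← conjTranspose_eq_transpose_of_trivial,
    trace_conjTranspose_mul_self_eq_zero_iff]

variable [DecidableEq m]

lemma frobSq_orthogonal_mul_sub {V : Matrix m m ℝ} (hV : Vᵀ * V = 1) (A B : Matrix m n ℝ) :
    frobSq (V * A - B) = frobSq A + frobSq B - 2 * (Vᵀ * (B * Aᵀ)).trace := by
  have hcross : (Bᵀ * (V * A)).trace = (Vᵀ * (B * Aᵀ)).trace := by
    rw [← trace_transpose]
    simp only [transpose_mul, transpose_transpose]
    rw [Matrix.mul_assoc, trace_mul_comm, Matrix.mul_assoc]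
  have hsq : (V * A)ᵀ * (V * A) = Aᵀ * A := by
    rw [transpose_mul, Matrix.mul_assoc, ← Matrix.mul_assoc Vᵀ, hV, Matrix.one_mul]
  have hsymm : ((V * A)ᵀ * B).trace = (Bᵀ * (V * A)).trace := by
    rw [← trace_transpose, transpose_mul, transpose_transpose]
  simp only [frobSq_eq_trace, transpose_sub, Matrix.sub_mul, Matrix.mul_sub, trace_sub, hsq,
    hsymm, hcross]
  ring

end Frobenius

section Orthogonal

variable {ι : Type*} [Fintype ι] [DecidableEq ι]

lemma transpose_mul_orthogonal {U V : Matrix ι ι ℝ} (hU : Uᵀ * U = 1) (hV : Vᵀ * V = 1) :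
    (Vᵀ * U)ᵀ * (Vᵀ * U) = 1 := by
  rw [transpose_mul, transpose_transpose, Matrix.mul_assoc, ← Matrix.mul_assoc V,
    mul_eq_one_comm.mp hV, Matrix.one_mul, hU]

lemma frobSq_sub_one_mul_sqrt {P Q : Matrix ι ι ℝ} (hP : P.PosSemidef) (hQ : Qᵀ * Q = 1) :
    frobSq ((Q - 1) * CFC.sqrt P) = 2 * (P.trace - (Q * P).trace) := by
  set S := CFC.sqrt P
  have hSS : S * S = P := CFC.sqrt_mul_sqrt_self P hP.nonneg
  have hSt : Sᵀ = S := by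
    simpa [← conjTranspose_eq_transpose_of_trivial] using
      (CFC.sqrt_nonneg P).posSemidef.isHermitian.eq
  have hSQS : (S * Q * S).trace = (Q * P).trace := by
    rw [trace_mul_comm, ← Matrix.mul_assoc, hSS, trace_mul_comm]
  have hSQtS : (S * Qᵀ * S).trace = (Q * P).trace := by
    rw [← trace_transpose]
    simp only [transpose_mul, transpose_transpose, hSt]
    rw [← Matrix.mul_assoc, hSQS]
  have hexpand : ((Q - 1) * S)ᵀ * ((Q - 1) * S) =
      S * (Qᵀ * Q) * S - S * Qᵀ * S - S * Q * S + S * S := by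
    rw [transpose_mul, hSt, transpose_sub, transpose_one]
    noncomm_ring
  rw [frobSq_eq_trace, hexpand, hQ, Matrix.mul_one, hSS, trace_add, trace_sub, trace_sub, hSQS,
    hSQtS]
  ring

lemma trace_orthogonal_mul_le {P Q : Matrix ι ι ℝ} (hP : P.PosSemidef) (hQ : Qᵀ * Q = 1) :
    (Q * P).trace ≤ P.trace := by
  linarith [frobSq_sub_one_mul_sqrt hP hQ, frobSq_nonneg ((Q - 1) * CFC.sqrt P)]

lemma eq_one_of_trace_orthogonal_mul_eq {P Q : Matrix ι ι ℝ} (hP : P.PosDef) (hQ : Qᵀ * Q = 1)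
    (htr : (Q * P).trace = P.trace) : Q = 1 := by
  have hS : IsUnit (CFC.sqrt P) := by
    refine isUnit_of_mul_isUnit_left (y := CFC.sqrt P) ?_
    rw [CFC.sqrt_mul_sqrt_self P hP.posSemidef.nonneg]
    exact hP.isUnit
  have h0 : (Q - 1) * CFC.sqrt P = 0 := by
    rw [← frobSq_eq_zero_iff, frobSq_sub_one_mul_sqrt hP.posSemidef hQ, htr, sub_self, mul_zero]
  exact sub_eq_zero.mp (hS.mul_left_eq_zero.mp h0)

lemma frobSq_orthogonal_mul_sub_of_polar {κ : Type*} [Fintype κ] {A B : Matrix ι κ ℝ}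
    {U P V : Matrix ι ι ℝ} (hU : Uᵀ * U = 1) (hUP : B * Aᵀ = U * P) (hV : Vᵀ * V = 1) :
    frobSq (V * A - B) = frobSq (U * A - B) + 2 * (P.trace - (Vᵀ * U * P).trace) := by
  rw [frobSq_orthogonal_mul_sub hV, frobSq_orthogonal_mul_sub hU, hUP, ← Matrix.mul_assoc,
    ← Matrix.mul_assoc, hU, Matrix.one_mul]
  ring

end Orthogonal

theorem procrustes_solution_via_polar_general {n k : ℕ}
    (A B : Matrix (Fin n) (Fin k) ℝ)
    (U P : Matrix (Fin n) (Fin n) ℝ)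
    (hU : Uᵀ * U = 1) (hP : P.PosDef) (hUP : B * Aᵀ = U * P) :
    (∀ V : Matrix (Fin n) (Fin n) ℝ, Vᵀ * V = 1 →
      frobSq (U * A - B) ≤ frobSq (V * A - B)) ∧
    (∀ V : Matrix (Fin n) (Fin n) ℝ, Vᵀ * V = 1 →
      (∀ V' : Matrix (Fin n) (Fin n) ℝ, V'ᵀ * V' = 1 →
        frobSq (V * A - B) ≤ frobSq (V' * A - B)) → V = U) := by
  have hgap : ∀ V : Matrix (Fin n) (Fin n) ℝ, Vᵀ * V = 1 →
      (Vᵀ * U * P).trace ≤ P.trace :=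
    fun V hV ↦ trace_orthogonal_mul_le hP.posSemidef (transpose_mul_orthogonal hU hV)
  refine ⟨fun V hV ↦ ?_, fun V hV hmin ↦ ?_⟩
  · rw [frobSq_orthogonal_mul_sub_of_polar hU hUP hV]
    linarith [hgap V hV]
  · have htr : (Vᵀ * U * P).trace = P.trace := by
      have hle := hmin U hU
      rw [frobSq_orthogonal_mul_sub_of_polar hU hUP hV] at hle
      linarith [hgap V hV]
    have hVU : Vᵀ * U = 1 :=
      eq_one_of_trace_orthogonal_mul_eq hP (transpose_mul_orthogonal hU hV) htr
    exact left_inv_eq_right_inv (mul_eq_one_comm.mp hV) hVU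

/-- If BAᵀ is invertible with polar decomposition BAᵀ = UP (U orthogonal, P symmetric
positive definite), then U is the unique orthogonal matrix minimizing ‖VA - B‖
(Frobenius norm) over all orthogonal V. -/
theorem procrustes_solution_via_polar {n k : ℕ}
    (A B : Matrix (Fin n) (Fin k) ℝ)
    (U P : Matrix (Fin n) (Fin n) ℝ)
    (hinv : IsUnit (B * Aᵀ))
    (hU : Uᵀ * U = 1) (hP : P.PosDef) (hUP : B * Aᵀ = U * P) :
    (∀ V : Matrix (Fin n) (Fin n) ℝ, Vᵀ * V = 1 →
      frobSq (U * A - B) ≤ frobSq (V * A - B)) ∧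
    (∀ V : Matrix (Fin n) (Fin n) ℝ, Vᵀ * V = 1 →
      (∀ V' : Matrix (Fin n) (Fin n) ℝ, V'ᵀ * V' = 1 →
        frobSq (V * A - B) ≤ frobSq (V' * A - B)) → V = U) :=
  procrustes_solution_via_polar_general A B U P hU hP hUP
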